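/- arXiv:1203.1997 — 5 statements merged into one kernel-verified Lean document; each statement's English description precedes it below -/
import Mathlib

section
/- Fix a network (K, G) with fading structure π. Suppose there exist a nonempty subset of links L ⊆ K, a positive number σ, and two vectors μ, ν ∈ Φ(L) such that σ·μ > ν componentwise. Then for every sufficiently small ε > 0 there exist a deterministic channel process and a (randomized) arrival process satisfying Assumption A1, whose channel-state long-run averages equal π and whose arrival rate vector λ is supported on L and satisfies ‖λ|_L − (ν + ε·e_L)‖_∞ < ε (where e_L is the all-ones vector on L), such that under some tie-breaking rule for the GMS policy the queue process is unstable: E[Σ_{l∈K} Q_l[t]] → ∞ as t → ∞. -/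
open scoped BigOperators
open Filter MeasureTheory ProbabilityTheory

/-- `S` is an independent set of the interference graph `G` contained in the
set of links `J` (pairwise non-adjacent links). -/
def IsIndepIn {V : Type*} (G : SimpleGraph V) (J S : Finset V) : Prop :=
  S ⊆ J ∧ ∀ u ∈ S, ∀ v ∈ S, ¬ G.Adj u v

/-- `S` is a maximal independent set of `J`. -/
def IsMaxIndepIn {V : Type*} (G : SimpleGraph V) (J S : Finset V) : Prop :=
  IsIndepIn G J S ∧ ∀ T, IsIndepIn G J T → S ⊆ T → S = T

/-- 0/1 indicator vector of a finite set of links. -/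
def indVec {V : Type*} [DecidableEq V] (S : Finset V) : V → ℝ :=
  fun v => if v ∈ S then 1 else 0

/-- `M_{J,L}` : the (finite) set of 0/1 indicator vectors of the maximal independent
sets of `J`; the vectors are encoded in the ambient space `ℝ^V`, coordinates outside `J`
are automatically `0`. -/
def Mset {V : Type*} [DecidableEq V] (G : SimpleGraph V) (J : Finset V) : Set (V → ℝ) :=
  indVec '' {S | IsMaxIndepIn G J S}

/-- `CH(M_{J,L})` : the convex hull of `M_{J,L}`. -/
noncomputable def CHM {V : Type*} [DecidableEq V] (G : SimpleGraph V) (J : Finset V) :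
    Set (V → ℝ) :=
  convexHull ℝ (Mset G J)

/-- A fading structure `π` on the set of links: nonnegative weights summing to one. -/
def IsFading {V : Type*} [Fintype V] [DecidableEq V] (π : Finset V → ℝ) : Prop :=
  (∀ J, 0 ≤ π J) ∧ ∑ J : Finset V, π J = 1

/-- `Φ(L) = { Σ_{J ⊆ K} π(J) η_J : η_J ∈ CH(M_{J∩L,L}) }`. -/
def Phi {V : Type*} [Fintype V] [DecidableEq V] (G : SimpleGraph V) (π : Finset V → ℝ)
    (L : Finset V) : Set (V → ℝ) :=
  {φ | ∃ η : Finset V → V → ℝ, (∀ J, η J ∈ CHM G (J ∩ L)) ∧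
    φ = ∑ J : Finset V, π J • η J}

/-- The fading local pooling factor `σ*_L(π)` of a set of links `L`. -/
noncomputable def sigmaL {V : Type*} [Fintype V] [DecidableEq V] (G : SimpleGraph V)
    (π : Finset V → ℝ) (L : Finset V) : ℝ :=
  sInf {σ : ℝ | 0 ≤ σ ∧ ∃ φ1 ∈ Phi G π L, ∃ φ2 ∈ Phi G π L, ∀ v ∈ L, φ2 v ≤ σ * φ1 v}

/-- The Fading-LPF `σ*_G(π)` of the network: minimum of `σ*_L(π)` over nonempty `L ⊆ K`. -/
noncomputable def sigmaG {V : Type*} [Fintype V] [DecidableEq V] (G : SimpleGraph V)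
    (π : Finset V → ℝ) : ℝ :=
  sInf (sigmaL G π '' {L : Finset V | L.Nonempty})
/-- The marginal distribution `π_L` induced on a subset of links `L`. -/
noncomputable def marginal {V : Type*} [Fintype V] [DecidableEq V] (π : Finset V → ℝ)
    (L J : Finset V) : ℝ :=
  ∑ I : Finset V, if I ∩ L = J then π I else 0

/-- `n(M_J)`: minimum cardinality of a maximal independent set of `J`. -/
noncomputable def nM {V : Type*} (G : SimpleGraph V) (J : Finset V) : ℕ :=
  sInf (Finset.card '' {S | IsMaxIndepIn G J S})

/-- `N(M_J)`: maximum cardinality of a maximal independent set of `J`. -/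
noncomputable def NM {V : Type*} (G : SimpleGraph V) (J : Finset V) : ℕ :=
  sSup (Finset.card '' {S | IsMaxIndepIn G J S})

/-- interference degree of a link `l`: maximum cardinality of an independent set of `G`
contained in the closed neighborhood of `l`. -/
noncomputable def dI {V : Type*} (G : SimpleGraph V) (l : V) : ℕ :=
  sSup (Finset.card '' {S : Finset V | (∀ u ∈ S, ∀ v ∈ S, ¬ G.Adj u v) ∧
    ∀ v ∈ S, v = l ∨ G.Adj l v})

/-- interference degree `d_I(G)` of the whole interference graph. -/
noncomputable def dIG {V : Type*} (G : SimpleGraph V) : ℕ :=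
  sSup (Set.range (dI G))

/-- interference degree `d_I(S)` of the subgraph of `G` induced on the set of links `S`. -/
noncomputable def dISet {V : Type*} (G : SimpleGraph V) (Sset : Finset V) : ℕ :=
  sSup (Finset.card '' {T : Finset V | T ⊆ Sset ∧ (∀ u ∈ T, ∀ v ∈ T, ¬ G.Adj u v) ∧
    ∃ l ∈ Sset, ∀ v ∈ T, v = l ∨ G.Adj l v})

/-- The throughput region `Λ_f`. -/
def LambdaF {V : Type*} [Fintype V] [DecidableEq V] (G : SimpleGraph V) (π : Finset V → ℝ) :
    Set (V → ℝ) :=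
  {lam | (∀ v, 0 < lam v) ∧ ∃ η : Finset V → V → ℝ,
    (∀ J, η J ∈ CHM G J) ∧ ∀ v, lam v ≤ ∑ J : Finset V, π J * η J v}

/-- The scaled region `Λ_f(x)`. -/
def LambdaX {V : Type*} [Fintype V] [DecidableEq V] (G : SimpleGraph V) (π : Finset V → ℝ)
    (x : Finset V → ℝ) : Set (V → ℝ) :=
  {lam | (∀ v, 0 < lam v) ∧ ∃ η : Finset V → V → ℝ,
    (∀ J, η J ∈ CHM G J) ∧ ∀ v, lam v ≤ ∑ J : Finset V, x J * π J * η J v}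

/-- The standard (non-fading) local pooling factor of a graph `H`. -/
noncomputable def stdLPF (W : Type*) [Fintype W] [DecidableEq W] (H : SimpleGraph W) : ℝ :=
  sInf ((fun L => sInf {σ : ℝ | 0 ≤ σ ∧ ∃ φ1 ∈ CHM H L, ∃ φ2 ∈ CHM H L,
    ∀ v ∈ L, φ2 v ≤ σ * φ1 v}) '' {L : Finset W | L.Nonempty})

/-- discrete measurable structure on global channel states -/
instance {α : Type*} : MeasurableSpace (Finset α) := ⊤

/-- The queue-length process `Q` evolves according to
`Q_l[t+1] = (Q_l[t] − C_l[t]·1{l ∈ S[t]})⁺ + A_l[t]`, `Q_l[0] = 0`,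
where `GS t ω` is the set of 'ON' links and `S t ω` is the schedule. -/
def QueueEvol {V : Type*} [DecidableEq V] {Ω : Type*} (A : ℕ → V → Ω → ℕ)
    (GS S : ℕ → Ω → Finset V) (Q : ℕ → V → Ω → ℕ) : Prop :=
  (∀ l ω, Q 0 l ω = 0) ∧
  ∀ t l ω, Q (t + 1) l ω =
    (Q t l ω - (if l ∈ GS t ω ∧ l ∈ S t ω then 1 else 0)) + A t l ω

/-- `S` is a greedy maximal schedule for the weights `w`: a maximal independent set of `G`
with an enumeration `s_0, …, s_{k-1}` such that each `s_i` has maximal weight among the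
links neither equal nor adjacent to any of `s_0, …, s_{i-1}`. -/
def IsGreedySchedule {V : Type*} [Fintype V] [DecidableEq V] (G : SimpleGraph V)
    (w : V → ℝ) (S : Finset V) : Prop :=
  IsMaxIndepIn G Finset.univ S ∧
  ∃ s : ℕ → V, S = (Finset.range S.card).image s ∧
    (∀ i < S.card, ∀ j < S.card, s i = s j → i = j) ∧
    ∀ i < S.card, ∀ v : V, (∀ j < i, v ≠ s j ∧ ¬ G.Adj v (s j)) → w v ≤ w (s i)

/-- A GMS policy: at every time and in every sample point, the schedule is a greedy
maximal schedule for the weights `w_l = Q_l[t]·C_l[t]`. -/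
def IsGMSPolicy {V : Type*} [Fintype V] [DecidableEq V] {Ω : Type*} (G : SimpleGraph V)
    (GS S : ℕ → Ω → Finset V) (Q : ℕ → V → Ω → ℕ) : Prop :=
  ∀ t ω, IsGreedySchedule G
    (fun l => (Q t l ω : ℝ) * (if l ∈ GS t ω then 1 else 0)) (S t ω)

/-!
Write `ν = ∑_J π(J) ∑_S w_J(S) 1_S` with each `S` a maximal independent set of `J ∩ L`. A
largest-deficit-first deterministic sequence of pairs `(J_t, S_t)` has the frequencies
`π(J) w_J(S)`; let `J_t` be the channel state. Keep every queue of `L` equal to `⌊ε t⌋` and the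
others empty: then all ON links of `L` tie for the largest weight, so a tie-breaking rule may
start the greedy schedule with `S_t`, after which every available link has weight `0`. Links
of `L` are thus served at long-run rate `ν`, the arrivals that keep the queues on `⌊ε t⌋` have
rate `ν + ε`, and the total queue grows linearly.
-/

open Finset

noncomputable def timeAvg (u : ℕ → ℝ) (T : ℕ) : ℝ :=
  (∑ t ∈ range T, u t) / T

lemma tendsto_timeAvg_of_eventuallyEq {u v : ℕ → ℝ} {a : ℝ} (huv : u =ᶠ[atTop] v)
    (hu : Tendsto (timeAvg u) atTop (nhds a)) : Tendsto (timeAvg v) atTop (nhds a) := by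
  obtain ⟨N, hN⟩ := eventually_atTop.1 huv
  have hsum : ∀ T ≥ N, ∑ t ∈ range T, v t = ∑ t ∈ range T, u t + ∑ t ∈ range N, (v t - u t) := by
    intro T hT
    rw [sum_subset (range_subset_range.2 hT) fun t _ ht => by
      rw [hN t (by simpa using ht), sub_self], ← sum_add_distrib]
    simp
  have hlim := hu.add (tendsto_const_div_atTop_nhds_zero_nat (∑ t ∈ range N, (v t - u t)))
  rw [add_zero] at hlim
  refine hlim.congr' (eventually_atTop.2 ⟨N, fun T hT => ?_⟩)
  rw [timeAvg, timeAvg, hsum T hT, add_div]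

lemma timeAvg_comp_eq_sum {ι : Type*} [Fintype ι] [DecidableEq ι] (c : ℕ → ι) (f : ι → ℝ)
    (T : ℕ) :
    timeAvg (fun t => f (c t)) T = ∑ k, timeAvg (fun t => if c t = k then 1 else 0) T * f k := by
  simp only [timeAvg, div_mul_eq_mul_div, ← sum_div, sum_mul, ite_mul, one_mul, zero_mul]
  rw [sum_comm]
  simp

section GreedySeq

variable {ι : Type*} [Fintype ι] [DecidableEq ι] [Nonempty ι] (p : ι → ℝ)

/-- `greedyDeficit p t k = t * p k - #{s < t | greedySeq p s = k}`. -/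
noncomputable def greedyDeficit : ℕ → ι → ℝ
  | 0 => 0
  | t + 1 => fun k => greedyDeficit t k + p k -
      if k = (Finite.exists_max fun j => greedyDeficit t j + p j).choose then 1 else 0

noncomputable def greedySeq (t : ℕ) : ι :=
  (Finite.exists_max fun j => greedyDeficit p t j + p j).choose

lemma greedyDeficit_succ (t : ℕ) (k : ι) :
    greedyDeficit p (t + 1) k = greedyDeficit p t k + p k - if k = greedySeq p t then 1 else 0 :=
  rfl

lemma le_greedyDeficit_greedySeq (t : ℕ) (k : ι) :
    greedyDeficit p t k + p k ≤ greedyDeficit p t (greedySeq p t) + p (greedySeq p t) :=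
  (Finite.exists_max fun j => greedyDeficit p t j + p j).choose_spec k

variable {p}

lemma sum_greedyDeficit (hp1 : ∑ k, p k = 1) (t : ℕ) : ∑ k, greedyDeficit p t k = 0 := by
  induction t with
  | zero => simp [greedyDeficit]
  | succ t ih => simp [greedyDeficit_succ, sum_sub_distrib, sum_add_distrib, ih, hp1]

lemma greedyDeficit_greedySeq_pos (hp1 : ∑ k, p k = 1) (t : ℕ) :
    0 < greedyDeficit p t (greedySeq p t) + p (greedySeq p t) := by
  by_contra! h
  have : ∑ k, (greedyDeficit p t k + p k) ≤ 0 :=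
    sum_nonpos fun k _ => (le_greedyDeficit_greedySeq p t k).trans h
  rw [sum_add_distrib, sum_greedyDeficit hp1, hp1] at this
  norm_num at this

lemma greedyDeficit_nonpos_of_eq_zero {k : ι} (hk : p k = 0) (t : ℕ) : greedyDeficit p t k ≤ 0 := by
  induction t with
  | zero => simp [greedyDeficit]
  | succ t ih => rw [greedyDeficit_succ, hk]; split_ifs <;> linarith

lemma greedySeq_ne_zero (hp1 : ∑ k, p k = 1) (t : ℕ) : p (greedySeq p t) ≠ 0 := fun h => by
  linarith [greedyDeficit_greedySeq_pos hp1 t, greedyDeficit_nonpos_of_eq_zero h t]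

lemma neg_one_le_greedyDeficit (hp0 : ∀ k, 0 ≤ p k) (hp1 : ∑ k, p k = 1) (t : ℕ) (k : ι) :
    -1 ≤ greedyDeficit p t k := by
  induction t with
  | zero => simp [greedyDeficit]
  | succ t ih =>
    rw [greedyDeficit_succ]
    split_ifs with h
    · subst h; linarith [greedyDeficit_greedySeq_pos hp1 t]
    · linarith [hp0 k]

lemma greedyDeficit_le_card (hp0 : ∀ k, 0 ≤ p k) (hp1 : ∑ k, p k = 1) (t : ℕ) (k : ι) :
    greedyDeficit p t k ≤ Fintype.card ι := by
  have hrest : #(univ.erase k) • (-1 : ℝ) ≤ ∑ j ∈ univ.erase k, greedyDeficit p t j :=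
    card_nsmul_le_sum _ _ _ fun j _ => neg_one_le_greedyDeficit hp0 hp1 t j
  have hcard : (#(univ.erase k) : ℝ) ≤ Fintype.card ι := by
    exact_mod_cast card_le_univ _
  rw [nsmul_eq_mul] at hrest
  linarith [sum_greedyDeficit hp1 t, add_sum_erase univ (greedyDeficit p t) (mem_univ k)]

lemma sum_indicator_greedySeq (k : ι) (T : ℕ) :
    ∑ t ∈ range T, (if greedySeq p t = k then 1 else 0) = T * p k - greedyDeficit p T k := by
  induction T with
  | zero => simp [greedyDeficit]
  | succ T ih =>
    rw [sum_range_succ, ih, greedyDeficit_succ]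
    simp only [eq_comm (a := k)]
    push_cast
    ring

lemma tendsto_timeAvg_indicator_greedySeq (hp0 : ∀ k, 0 ≤ p k) (hp1 : ∑ k, p k = 1) (k : ι) :
    Tendsto (timeAvg fun t => if greedySeq p t = k then 1 else 0) atTop (nhds (p k)) := by
  have hdef : Tendsto (fun T : ℕ => greedyDeficit p T k / T) atTop (nhds 0) :=
    tendsto_bdd_div_atTop_nhds_zero (b := -1) (B := Fintype.card ι)
      (.of_forall fun T => neg_one_le_greedyDeficit hp0 hp1 T k)
      (.of_forall fun T => greedyDeficit_le_card hp0 hp1 T k) tendsto_natCast_atTop_atTop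
  have hlim := (tendsto_const_nhds (x := p k)).sub hdef
  rw [sub_zero] at hlim
  refine hlim.congr' (eventually_atTop.2 ⟨1, fun T hT => ?_⟩)
  have hT : (T : ℝ) ≠ 0 := by exact_mod_cast (Nat.one_le_iff_ne_zero.1 hT)
  rw [timeAvg, sum_indicator_greedySeq]
  field_simp

end GreedySeq

lemma exists_seq_tendsto_timeAvg {ι : Type*} [Fintype ι] [DecidableEq ι] (p : ι → ℝ)
    (hp0 : ∀ k, 0 ≤ p k) (hp1 : ∑ k, p k = 1) :
    ∃ c : ℕ → ι, (∀ t, p (c t) ≠ 0) ∧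
      ∀ f : ι → ℝ, Tendsto (timeAvg fun t => f (c t)) atTop (nhds (∑ k, p k * f k)) := by
  have : Nonempty ι := by
    by_contra! h
    simp at hp1
  refine ⟨greedySeq p, greedySeq_ne_zero hp1, fun f => ?_⟩
  simp only [funext (timeAvg_comp_eq_sum (greedySeq p) f)]
  exact tendsto_finsetSum _ fun k _ => (tendsto_timeAvg_indicator_greedySeq hp0 hp1 k).mul_const _

section Tracking

/-- The arrivals that make a queue served by `s` follow the prescribed trajectory `q`. -/
def trackingArrival (q s : ℕ → ℕ) (t : ℕ) : ℕ :=
  q (t + 1) - (q t - s t)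

variable {q s : ℕ → ℕ}

lemma trackingArrival_spec (hq : Monotone q) (t : ℕ) :
    q (t + 1) = q t - s t + trackingArrival q s t := by
  have := hq (Nat.le_add_right t 1)
  unfold trackingArrival
  omega

lemma trackingArrival_le_two (hq : ∀ t, q (t + 1) ≤ q t + 1) (hs : ∀ t, s t ≤ 1) (t : ℕ) :
    trackingArrival q s t ≤ 2 := by
  have := hq t
  have := hs t
  unfold trackingArrival
  omega

/-- Once the queue is nonempty, the arrivals are the growth of `q` plus the service. -/
lemma tendsto_timeAvg_trackingArrival {ε ν : ℝ} (hq : Monotone q) (hq0 : q 0 = 0)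
    (hqtop : Tendsto q atTop atTop) (hqε : Tendsto (fun T : ℕ => (q T : ℝ) / T) atTop (nhds ε))
    (hs1 : ∀ t, s t ≤ 1) (hs : Tendsto (timeAvg fun t => (s t : ℝ)) atTop (nhds ν)) :
    Tendsto (timeAvg fun t => (trackingArrival q s t : ℝ)) atTop (nhds (ε + ν)) := by
  have hgrowth : timeAvg (fun t => (q (t + 1) : ℝ) - q t) = fun T => (q T : ℝ) / T := by
    ext T
    rw [timeAvg, sum_range_sub (fun t => (q t : ℝ)), hq0, Nat.cast_zero, sub_zero]
  have hsum : Tendsto (timeAvg fun t => ((q (t + 1) : ℝ) - q t) + s t) atTop (nhds (ε + ν)) := by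
    refine ((hgrowth ▸ hqε).add hs).congr fun T => ?_
    simp only [timeAvg, sum_add_distrib, add_div]
  refine tendsto_timeAvg_of_eventuallyEq ?_ hsum
  filter_upwards [hqtop.eventually_ge_atTop 1] with t ht
  have := hq (Nat.le_add_right t 1)
  have := hs1 t
  rw [trackingArrival, Nat.cast_sub (by omega), Nat.cast_sub (by omega)]
  ring

end Tracking

section RampQueue

variable {V : Type*} [DecidableEq V] (L : Finset V) (ε : ℝ)

noncomputable def rampQueue (t : ℕ) (l : V) : ℕ :=
  if l ∈ L then ⌊ε * t⌋₊ else 0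

variable {L ε}

lemma rampQueue_zero (l : V) : rampQueue L ε 0 l = 0 := by
  simp [rampQueue]

lemma monotone_rampQueue (hε : 0 ≤ ε) (l : V) : Monotone fun t => rampQueue L ε t l := by
  intro a b hab
  unfold rampQueue
  split_ifs
  · exact Nat.floor_mono (mul_le_mul_of_nonneg_left (by exact_mod_cast hab) hε)
  · rfl

lemma rampQueue_succ_le (hε : 0 ≤ ε) (hε1 : ε ≤ 1) (t : ℕ) (l : V) :
    rampQueue L ε (t + 1) l ≤ rampQueue L ε t l + 1 := by
  unfold rampQueue
  split_ifs
  · rw [← Nat.floor_add_one (by positivity)]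
    exact Nat.floor_mono (by push_cast; nlinarith)
  · omega

lemma tendsto_sum_rampQueue_atTop (hL : L.Nonempty) (hε : 0 < ε) [Fintype V] :
    Tendsto (fun t => ∑ l, (rampQueue L ε t l : ℝ)) atTop atTop := by
  have hcard : (0 : ℝ) < #L := by exact_mod_cast hL.card_pos
  refine ((tendsto_natCast_atTop_atTop.comp (tendsto_nat_floor_mul_atTop ε hε)).const_mul_atTop
    hcard).congr fun t => ?_
  simp [rampQueue, Nat.cast_ite, sum_ite_mem]

lemma tendsto_timeAvg_trackingArrival_rampQueue (hε : 0 < ε) {l : V} (hl : l ∈ L)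
    {s : ℕ → ℕ} {ν : ℝ} (hs1 : ∀ t, s t ≤ 1)
    (hs : Tendsto (timeAvg fun t => (s t : ℝ)) atTop (nhds ν)) :
    Tendsto (timeAvg fun t => (trackingArrival (rampQueue L ε · l) s t : ℝ)) atTop
      (nhds (ν + ε)) := by
  rw [add_comm]
  refine tendsto_timeAvg_trackingArrival (monotone_rampQueue hε.le l) (rampQueue_zero l) ?_ ?_
    hs1 hs
  · simpa [rampQueue, hl] using tendsto_nat_floor_mul_atTop ε hε
  · simpa [rampQueue, hl, Function.comp_def] using
      (tendsto_nat_floor_mul_div_atTop hε.le).comp tendsto_natCast_atTop_atTop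

end RampQueue

section IndependentSets

variable {V : Type*} {G : SimpleGraph V}

lemma IsMaxIndepIn.mem_of_forall_not_adj {J S : Finset V} {v : V} [DecidableEq V]
    (hS : IsMaxIndepIn G J S) (hv : v ∈ J) (hadj : ∀ u ∈ S, ¬ G.Adj v u) : v ∈ S := by
  have hins : IsIndepIn G J (insert v S) := by
    refine ⟨insert_subset hv hS.1.1, fun a ha b hb => ?_⟩
    rw [mem_insert] at ha hb
    rcases ha with rfl | ha <;> rcases hb with rfl | hb
    · exact G.irrefl
    · exact hadj b hb
    · exact fun h => hadj a ha h.symm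
    · exact hS.1.2 a ha b hb
  rw [hS.2 _ hins (subset_insert v S)]
  exact mem_insert_self v S

lemma exists_isMaxIndepIn_superset [Fintype V] {J S : Finset V} (hS : IsIndepIn G J S) :
    ∃ T, S ⊆ T ∧ IsMaxIndepIn G J T := by
  classical
  obtain ⟨T, hT, hTmax⟩ :=
    exists_max_image (univ.filter fun T => IsIndepIn G J T ∧ S ⊆ T) card ⟨S, by simp [hS]⟩
  simp only [mem_filter, mem_univ, true_and] at hT hTmax
  exact ⟨T, hT.2, hT.1, fun T' hT' hTT' =>
    eq_of_subset_of_card_le hTT' (hTmax T' ⟨hT', hT.2.trans hTT'⟩)⟩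

lemma indVec_injective [DecidableEq V] : Function.Injective (indVec (V := V)) := by
  intro S T h
  ext v
  have hv := congrFun h v
  unfold indVec at hv
  split_ifs at hv <;> simp_all

lemma exists_weights_of_mem_CHM [Fintype V] [DecidableEq V] {J : Finset V} {η : V → ℝ}
    (hη : η ∈ CHM G J) :
    ∃ w : Finset V → ℝ, (∀ S, 0 ≤ w S) ∧ ∑ S, w S = 1 ∧ (∀ S, w S ≠ 0 → IsMaxIndepIn G J S) ∧
      η = ∑ S, w S • indVec S := by
  classical
  have hM : Mset G J = ↑((univ.filter (IsMaxIndepIn G J)).image indVec) := by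
    ext; simp [Mset]
  rw [CHM, hM, mem_convexHull'] at hη
  obtain ⟨w, hw0, hw1, rfl⟩ := hη
  have hinj : Set.InjOn indVec (univ.filter (IsMaxIndepIn G J) : Set (Finset V)) :=
    indVec_injective.injOn
  refine ⟨fun S => if IsMaxIndepIn G J S then w (indVec S) else 0, fun S => ?_, ?_,
    fun S hS => by_contra fun h => hS (if_neg h), ?_⟩
  · dsimp only
    split_ifs with h
    · exact hw0 _ (mem_image_of_mem _ (by simpa using h))
    · rfl
  · rw [← hw1, sum_image hinj, ← sum_filter]
  · rw [sum_image hinj]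
    simp [ite_smul, sum_filter]

end IndependentSets

section GreedySchedule

variable {V : Type*} {G : SimpleGraph V}

lemma image_range_getD_append [DecidableEq V] (l₁ l₂ : List V) (d : V) :
    (range l₁.length).image (fun i => (l₁ ++ l₂).getD i d) = l₁.toFinset := by
  ext v
  simp only [mem_image, mem_range, List.mem_toFinset, List.mem_iff_getElem]
  refine exists_congr fun i => ⟨fun ⟨hi, h⟩ => ⟨hi, ?_⟩, fun ⟨hi, h⟩ => ⟨hi, ?_⟩⟩ <;>
    simpa [List.getElem?_append_left hi, hi] using h

lemma exists_enum_of_subset [DecidableEq V] [Nonempty V] {S T : Finset V} (hST : S ⊆ T) :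
    ∃ s : ℕ → V, T = (range #T).image s ∧ (∀ i < #T, ∀ j < #T, s i = s j → i = j) ∧
      S = (range #S).image s := by
  set l := S.toList ++ (T \ S).toList
  have hnd : l.Nodup := S.nodup_toList.append (T \ S).nodup_toList fun a ha hb => by simp_all
  have hl : l.toFinset = T := by
    ext v
    by_cases hv : v ∈ S
    · simp [l, hv, hST hv]
    · simp [l, hv]
  have hlen : l.length = #T := by rw [← hl, List.toFinset_card_of_nodup hnd]
  refine ⟨fun i => l.getD i (Classical.arbitrary V), ?_, fun i hi j hj hij => ?_, ?_⟩
  · simpa [hl, hlen] using (image_range_getD_append l [] (Classical.arbitrary V)).symm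
  · rw [← hlen] at hi hj
    simp only [List.getD_eq_getElem _ _ hi, List.getD_eq_getElem _ _ hj] at hij
    exact (hnd.getElem_inj_iff).1 hij
  · simpa using (image_range_getD_append S.toList (T \ S).toList (Classical.arbitrary V)).symm

lemma isGreedySchedule_of_subset [Fintype V] [DecidableEq V] [Nonempty V] {w : V → ℝ}
    {S T : Finset V} (hT : IsMaxIndepIn G univ T) (hST : S ⊆ T) (hw0 : ∀ v, 0 ≤ w v)
    (hS : ∀ u ∈ S, ∀ v, w v ≤ w u)
    (hrest : ∀ v, (∀ u ∈ S, v ≠ u ∧ ¬ G.Adj v u) → w v = 0) :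
    IsGreedySchedule G w T := by
  obtain ⟨s, hTs, hinj, hSs⟩ := exists_enum_of_subset hST
  refine ⟨hT, s, hTs, hinj, fun i hi v hv => ?_⟩
  by_cases hiS : i < #S
  · exact hS _ (hSs ▸ mem_image_of_mem s (mem_range.2 hiS)) v
  · rw [hrest v fun u hu => ?_]
    · exact hw0 _
    rw [hSs, mem_image] at hu
    obtain ⟨j, hj, rfl⟩ := hu
    exact hv j (by rw [mem_range] at hj; omega)

lemma IsMaxIndepIn.mem_and_mem_iff [Fintype V] [DecidableEq V] {J L S T : Finset V} {l : V}
    (hS : IsMaxIndepIn G (J ∩ L) S) (hST : S ⊆ T) (hT : IsIndepIn G univ T) (hl : l ∈ L) :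
    l ∈ J ∧ l ∈ T ↔ l ∈ S :=
  ⟨fun ⟨hJ, hlT⟩ => hS.mem_of_forall_not_adj (mem_inter.2 ⟨hJ, hl⟩) fun u hu =>
      hT.2 l hlT u (hST hu),
    fun h => ⟨(mem_inter.1 (hS.1.1 h)).1, hST h⟩⟩

lemma isGreedySchedule_of_isMaxIndepIn_inter [Fintype V] [DecidableEq V] [Nonempty V]
    {J L S T : Finset V} (hS : IsMaxIndepIn G (J ∩ L) S) (hST : S ⊆ T)
    (hT : IsMaxIndepIn G univ T) (M : ℕ) :
    IsGreedySchedule G (fun l => ((if l ∈ L then M else 0 : ℕ) : ℝ) * if l ∈ J then 1 else 0)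
      T := by
  refine isGreedySchedule_of_subset hT hST (fun v => by split_ifs <;> simp) (fun u hu v => ?_)
    fun v hv => by_contra fun hne => ?_
  · obtain ⟨huJ, huL⟩ := mem_inter.1 (hS.1.1 hu)
    simp only [huJ, huL, if_true, mul_one]
    split_ifs <;> simp
  · have hvJL : v ∈ J ∩ L := by
      by_contra h
      rw [mem_inter, not_and_or] at h
      rcases h with h | h <;> simp [h] at hne
    exact (hv v (hS.mem_of_forall_not_adj hvJL fun u hu => (hv u hu).2)).1 rfl

end GreedySchedule

section AdversarialSchedule

variable {V : Type*} [Fintype V] [DecidableEq V] {G : SimpleGraph V} {π : Finset V → ℝ}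
  {L : Finset V} {ν : V → ℝ}

lemma exists_channel_schedule_seq (hπ : IsFading π) (hν : ν ∈ Phi G π L) :
    ∃ J S : ℕ → Finset V, (∀ t, IsMaxIndepIn G (J t ∩ L) (S t)) ∧
      (∀ K, Tendsto (timeAvg fun t => if J t = K then 1 else 0) atTop (nhds (π K))) ∧
      ∀ l, Tendsto (timeAvg fun t => if l ∈ S t then 1 else 0) atTop (nhds (ν l)) := by
  obtain ⟨η, hη, rfl⟩ := hν
  choose W hW0 hW1 hWmax hWη using fun K => exists_weights_of_mem_CHM (hη K)
  set p : Finset V × Finset V → ℝ := fun k => π k.1 * W k.1 k.2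
  have hrow : ∀ K, ∑ S, p (K, S) = π K := by simp [p, ← mul_sum, hW1]
  have hp1 : ∑ k, p k = 1 := by
    rw [Fintype.sum_prod_type, ← hπ.2]
    exact sum_congr rfl fun K _ => hrow K
  obtain ⟨c, hcp, hc⟩ :=
    exists_seq_tendsto_timeAvg p (fun k => mul_nonneg (hπ.1 _) (hW0 _ _)) hp1
  refine ⟨fun t => (c t).1, fun t => (c t).2, fun t => hWmax _ _ (right_ne_zero_of_mul (hcp t)),
    fun K => ?_, fun l => ?_⟩
  · convert hc fun k => if k.1 = K then 1 else 0 using 2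
    rw [Fintype.sum_prod_type, sum_eq_single K (fun x _ hx => by simp [hx]) (by simp), ← hrow]
    simp
  · convert hc fun k => if l ∈ k.2 then 1 else 0 using 2
    simp [hWη, Fintype.sum_prod_type, Finset.sum_apply, indVec, p, mul_sum]

lemma exists_adversarial_schedule [Nonempty V] (hπ : IsFading π) (hν : ν ∈ Phi G π L) :
    ∃ J T : ℕ → Finset V,
      (∀ t M, IsGreedySchedule G
        (fun l => ((if l ∈ L then M else 0 : ℕ) : ℝ) * if l ∈ J t then 1 else 0) (T t)) ∧
      (∀ K, Tendsto (timeAvg fun t => if J t = K then 1 else 0) atTop (nhds (π K))) ∧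
      ∀ l ∈ L, Tendsto (timeAvg fun t => ((if l ∈ J t ∧ l ∈ T t then 1 else 0 : ℕ) : ℝ)) atTop
        (nhds (ν l)) := by
  obtain ⟨J, S, hS, hJ, hSν⟩ := exists_channel_schedule_seq hπ hν
  choose T hST hT using fun t =>
    exists_isMaxIndepIn_superset (G := G) (J := univ) ⟨subset_univ (S t), (hS t).1.2⟩
  refine ⟨J, T, fun t => isGreedySchedule_of_isMaxIndepIn_inter (hS t) (hST t) (hT t), hJ,
    fun l hl => ?_⟩
  convert hSν l using 3 with t
  simp [(hS t).mem_and_mem_iff (hST t) (hT t).1 hl]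

end AdversarialSchedule

theorem adversarial_instability_general {V : Type*} [Fintype V] [DecidableEq V]
    (G : SimpleGraph V) (π : Finset V → ℝ) (hπ : IsFading π)
    (L : Finset V) (hL : L.Nonempty)
    (νvec : V → ℝ) (hν : νvec ∈ Phi G π L) :
    ∃ ε0 : ℝ, 0 < ε0 ∧ ∀ ε : ℝ, 0 < ε → ε < ε0 →
      ∃ (lam : V → ℝ) (GSd : ℕ → Finset V),
        -- the arrival rate vector is supported on `L` and close to `ν + ε·e_L`
        (∀ v, v ∉ L → lam v = 0) ∧
        (∀ v ∈ L, |lam v - (νvec v + ε)| < ε) ∧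
        -- the deterministic channel process has long-run state fractions `π`
        (∀ J : Finset V,
          Tendsto (fun T : ℕ => (∑ t ∈ Finset.range T, if GSd t = J then (1 : ℝ) else 0) / T)
            atTop (nhds (π J))) ∧
        ∃ (Ω : Type) (mΩ : MeasurableSpace Ω) (μ : Measure Ω),
          IsProbabilityMeasure μ ∧
          ∃ (A : ℕ → V → Ω → ℕ) (S : ℕ → Ω → Finset V) (Q : ℕ → V → Ω → ℕ),
            (∀ t l, Measurable (A t l)) ∧
            (∀ t, Measurable (S t)) ∧
            (∀ t l, Measurable (Q t l)) ∧
            (∃ B : ℕ, ∀ t l ω, A t l ω ≤ B) ∧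
            -- queue dynamics under a GMS policy (some tie-breaking rule)
            QueueEvol A (fun t _ => GSd t) S Q ∧
            IsGMSPolicy G (fun t _ => GSd t) S Q ∧
            -- Assumption A1: long-run time averages of the arrivals are `lam`
            (∀ᵐ ω ∂μ, ∀ l : V,
              Tendsto (fun T : ℕ => (∑ t ∈ Finset.range T, (A t l ω : ℝ)) / T)
                atTop (nhds (lam l))) ∧
            -- instability
            Tendsto (fun t : ℕ => ∫ ω, (∑ l : V, (Q t l ω : ℝ)) ∂μ) atTop atTop := by
  have : Nonempty V := ⟨hL.choose⟩
  obtain ⟨J, T, hgreedy, hJ, hserved⟩ := exists_adversarial_schedule hπ hν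
  refine ⟨1, one_pos, fun ε hε hε1 => ?_⟩
  set served : V → ℕ → ℕ := fun l t => if l ∈ J t ∧ l ∈ T t then 1 else 0
  have hserved1 : ∀ l t, served l t ≤ 1 := fun l t => by simp only [served]; split_ifs <;> simp
  refine ⟨fun l => if l ∈ L then νvec l + ε else 0, J, fun l hl => if_neg hl,
    fun l hl => by simpa [hl] using hε, hJ, Unit, inferInstance, Measure.dirac (), inferInstance,
    fun t l _ => trackingArrival (rampQueue L ε · l) (served l) t, fun t _ => T t,
    fun t l _ => rampQueue L ε t l, fun _ _ => measurable_const, fun _ => measurable_const,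
    fun _ _ => measurable_const,
    ⟨2, fun t l _ => trackingArrival_le_two (rampQueue_succ_le hε.le hε1.le · l) (hserved1 l) t⟩,
    ⟨fun l _ => rampQueue_zero l,
      fun t l _ => trackingArrival_spec (s := served l) (monotone_rampQueue hε.le l) t⟩,
    fun t _ => hgreedy t _, ae_of_all _ fun _ l => ?_,
    by simpa using tendsto_sum_rampQueue_atTop hL hε⟩
  by_cases hl : l ∈ L
  · simp only [hl, if_true]
    exact tendsto_timeAvg_trackingArrival_rampQueue hε hl (hserved1 l) (hserved l hl)
  · simp [hl, rampQueue, trackingArrival]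

/-- **Lemma 1.** If for some nonempty `L ⊆ K`, `σ > 0` and `μ, ν ∈ Φ(L)` we have
`σ·μ > ν` componentwise on `L`, then for every sufficiently small `ε > 0` there are a
deterministic channel process with long-run state fractions `π` and a (randomized)
arrival process satisfying Assumption A1 whose rate vector is supported on `L` and is
within `ε` (in sup norm on `L`) of `ν + ε·e_L`, such that under some tie-breaking rule
the GMS policy is unstable: `E[Σ_l Q_l[t]] → ∞`. -/
theorem adversarial_instability {V : Type*} [Fintype V] [DecidableEq V]
    (G : SimpleGraph V) (π : Finset V → ℝ) (hπ : IsFading π)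
    (L : Finset V) (hL : L.Nonempty)
    (σ : ℝ) (hσ : 0 < σ)
    (μvec νvec : V → ℝ) (hμ : μvec ∈ Phi G π L) (hν : νvec ∈ Phi G π L)
    (hdom : ∀ v ∈ L, νvec v < σ * μvec v) :
    ∃ ε0 : ℝ, 0 < ε0 ∧ ∀ ε : ℝ, 0 < ε → ε < ε0 →
      ∃ (lam : V → ℝ) (GSd : ℕ → Finset V),
        -- the arrival rate vector is supported on `L` and close to `ν + ε·e_L`
        (∀ v, v ∉ L → lam v = 0) ∧
        (∀ v ∈ L, |lam v - (νvec v + ε)| < ε) ∧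
        -- the deterministic channel process has long-run state fractions `π`
        (∀ J : Finset V,
          Tendsto (fun T : ℕ => (∑ t ∈ Finset.range T, if GSd t = J then (1 : ℝ) else 0) / T)
            atTop (nhds (π J))) ∧
        ∃ (Ω : Type) (mΩ : MeasurableSpace Ω) (μ : Measure Ω),
          IsProbabilityMeasure μ ∧
          ∃ (A : ℕ → V → Ω → ℕ) (S : ℕ → Ω → Finset V) (Q : ℕ → V → Ω → ℕ),
            (∀ t l, Measurable (A t l)) ∧
            (∀ t, Measurable (S t)) ∧
            (∀ t l, Measurable (Q t l)) ∧
            (∃ B : ℕ, ∀ t l ω, A t l ω ≤ B) ∧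
            -- queue dynamics under a GMS policy (some tie-breaking rule)
            QueueEvol A (fun t _ => GSd t) S Q ∧
            IsGMSPolicy G (fun t _ => GSd t) S Q ∧
            -- Assumption A1: long-run time averages of the arrivals are `lam`
            (∀ᵐ ω ∂μ, ∀ l : V,
              Tendsto (fun T : ℕ => (∑ t ∈ Finset.range T, (A t l ω : ℝ)) / T)
                atTop (nhds (lam l))) ∧
            -- instability
            Tendsto (fun t : ℕ => ∫ ω, (∑ l : V, (Q t l ω : ℝ)) ∂μ) atTop atTop :=
  adversarial_instability_general G π hπ L hL νvec hν
end

section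
/- Fix a network (K, G) with fading structure π. Suppose that for every J ⊆ K we are given vectors μ_J, ν_J ∈ CH(M_{J,K}) and a real number H_J ≥ 0 such that ν_J ≤ H_J·μ_J componentwise. If Σ_{J⊆K} π(J)·μ_J(l) > 0 for every link l ∈ K, then σ*_G(π) ≤ max_{l∈K} [ Σ_{J⊆K} π(J)·H_J·μ_J(l) ] / [ Σ_{J⊆K} π(J)·μ_J(l) ]. -/
open scoped BigOperators
open Filter MeasureTheory ProbabilityTheory

lemma CHM_nonneg {V : Type*} [DecidableEq V] (G : SimpleGraph V) (J : Finset V)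
    {x : V → ℝ} (hx : x ∈ CHM G J) (v : V) : 0 ≤ x v := by
  have hconv : Convex ℝ {y : V → ℝ | 0 ≤ y v} := by
    intro a ha b hb s t hs ht hst
    have : (s • a + t • b) v = s * a v + t * b v := rfl
    simp only [Set.mem_setOf_eq] at ha hb ⊢
    rw [this]
    positivity
  have hsub : Mset G J ⊆ {y : V → ℝ | 0 ≤ y v} := by
    rintro _ ⟨S, -, rfl⟩
    simp only [Set.mem_setOf_eq, indVec]
    split <;> norm_num
  exact convexHull_min hsub hconv hx

/-- **Theorem 2 (Upper bound on the Fading-LPF).**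
Given, for every `J ⊆ K`, vectors `μ_J, ν_J ∈ CH(M_{J,K})` and `H_J ≥ 0` with
`ν_J ≤ H_J·μ_J` componentwise, and assuming `Σ_J π(J) μ_J(l) > 0` for every link `l`,
we have `σ*_G(π) ≤ max_l (Σ_J π(J) H_J μ_J(l)) / (Σ_J π(J) μ_J(l))`. -/
theorem flpf_upper_bound {V : Type*} [Fintype V] [DecidableEq V] [Nonempty V]
    (G : SimpleGraph V) (π : Finset V → ℝ) (hπ : IsFading π)
    (μv νv : Finset V → V → ℝ) (H : Finset V → ℝ)
    (hμ : ∀ J, μv J ∈ CHM G J) (hν : ∀ J, νv J ∈ CHM G J)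
    (hH : ∀ J, 0 ≤ H J)
    (hle : ∀ J, ∀ v, νv J v ≤ H J * μv J v)
    (hpos : ∀ l : V, 0 < ∑ J : Finset V, π J * μv J l) :
    sigmaG G π ≤
      ⨆ l : V, (∑ J : Finset V, π J * H J * μv J l) / (∑ J : Finset V, π J * μv J l) := by
  set σ := ⨆ l : V, (∑ J : Finset V, π J * H J * μv J l) / (∑ J : Finset V, π J * μv J l)
    with hσ
  have hratio_nonneg : ∀ l : V,
      0 ≤ (∑ J : Finset V, π J * H J * μv J l) / (∑ J : Finset V, π J * μv J l) := by
    intro l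
    apply div_nonneg _ (hpos l).le
    apply Finset.sum_nonneg
    intro J _
    have := CHM_nonneg G J (hμ J) l
    have := hπ.1 J
    have := hH J
    positivity
  have hratio_le : ∀ l : V,
      (∑ J : Finset V, π J * H J * μv J l) / (∑ J : Finset V, π J * μv J l) ≤ σ := by
    intro l
    exact le_ciSup (f := fun l : V => (∑ J : Finset V, π J * H J * μv J l) / (∑ J : Finset V, π J * μv J l)) (Set.Finite.bddAbove (Set.finite_range _)) l
  have hσ0 : 0 ≤ σ := le_trans (hratio_nonneg (Classical.arbitrary V)) (hratio_le _)
  -- σ belongs to the defining set of sigmaL for L = univ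
  have hmem : σ ∈ {s : ℝ | 0 ≤ s ∧ ∃ φ1 ∈ Phi G π Finset.univ, ∃ φ2 ∈ Phi G π Finset.univ,
      ∀ v ∈ Finset.univ, φ2 v ≤ s * φ1 v} := by
    refine ⟨hσ0, ∑ J : Finset V, π J • μv J, ?_, ∑ J : Finset V, π J • νv J, ?_, ?_⟩
    · exact ⟨μv, fun J => by simpa using hμ J, rfl⟩
    · exact ⟨νv, fun J => by simpa using hν J, rfl⟩
    · intro v _
      have h1 : (∑ J : Finset V, π J • μv J) v = ∑ J : Finset V, π J * μv J v := by
        simp [Finset.sum_apply]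
      have h2 : (∑ J : Finset V, π J • νv J) v = ∑ J : Finset V, π J * νv J v := by
        simp [Finset.sum_apply]
      rw [h1, h2]
      have hstep : ∑ J : Finset V, π J * νv J v ≤ ∑ J : Finset V, π J * H J * μv J v := by
        apply Finset.sum_le_sum
        intro J _
        have := hπ.1 J
        calc π J * νv J v ≤ π J * (H J * μv J v) := by
              exact mul_le_mul_of_nonneg_left (hle J v) this
          _ = π J * H J * μv J v := by ring
      refine hstep.trans ?_
      exact (div_le_iff₀ (hpos v)).mp (hratio_le v)
  have hbdd : BddBelow {s : ℝ | 0 ≤ s ∧ ∃ φ1 ∈ Phi G π Finset.univ, ∃ φ2 ∈ Phi G π Finset.univ,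
      ∀ v ∈ Finset.univ, φ2 v ≤ s * φ1 v} := ⟨0, fun s hs => hs.1⟩
  have hL : sigmaL G π Finset.univ ≤ σ := csInf_le hbdd hmem
  have hsigmaL_nonneg : ∀ L : Finset V, 0 ≤ sigmaL G π L := by
    intro L
    exact Real.sInf_nonneg (fun s hs => hs.1)
  have hG : sigmaG G π ≤ sigmaL G π Finset.univ := by
    apply csInf_le
    · exact ⟨0, by rintro _ ⟨L, -, rfl⟩; exact hsigmaL_nonneg L⟩
    · exact ⟨Finset.univ, Finset.univ_nonempty, rfl⟩
  exact hG.trans hL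
end

section
/- Fix a network (K, G) with fading structure π and a nonempty L ⊆ K such that Σ_{J⊆L} π_L(J)·N(M_J) > 0. Then σ*_L(π) ≥ [ Σ_{J⊆L} π_L(J)·n(M_J) ] / [ Σ_{J⊆L} π_L(J)·N(M_J) ]. -/
open scoped BigOperators
open Filter MeasureTheory ProbabilityTheory

lemma exists_maxIndep {V : Type*} [DecidableEq V] (G : SimpleGraph V) (J : Finset V) :
    ∃ S, IsMaxIndepIn G J S := by
  classical
  have hempty : (∅ : Finset V) ∈ J.powerset.filter (fun S => ∀ u ∈ S, ∀ v ∈ S, ¬ G.Adj u v) := by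
    simp
  obtain ⟨S, hS, hmax⟩ := Finset.exists_max_image _ Finset.card ⟨∅, hempty⟩
  simp only [Finset.mem_filter, Finset.mem_powerset] at hS
  refine ⟨S, ⟨hS.1, hS.2⟩, fun T hT hST => ?_⟩
  refine Finset.eq_of_subset_of_card_le hST ?_
  exact hmax T (by simp only [Finset.mem_filter, Finset.mem_powerset]; exact ⟨hT.1, hT.2⟩)

lemma maxIndep_card_le {V : Type*} (G : SimpleGraph V) {J S : Finset V}
    (h : IsMaxIndepIn G J S) : S.card ≤ NM G J := by
  refine le_csSup ⟨J.card, ?_⟩ ⟨S, h, rfl⟩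
  rintro c ⟨T, hT, rfl⟩
  exact Finset.card_le_card hT.1.1

lemma nM_le_maxIndep_card {V : Type*} (G : SimpleGraph V) {J S : Finset V}
    (h : IsMaxIndepIn G J S) : nM G J ≤ S.card :=
  Nat.sInf_le ⟨S, h, rfl⟩

lemma sum_indVec {V : Type*} [DecidableEq V] {S L : Finset V} (h : S ⊆ L) :
    ∑ v ∈ L, indVec S v = (S.card : ℝ) := by
  unfold indVec
  rw [Finset.sum_ite_mem, Finset.inter_eq_right.mpr h]
  simp

lemma chm_bounds {V : Type*} [DecidableEq V] (G : SimpleGraph V) {J L : Finset V}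
    (hJL : J ⊆ L) {x : V → ℝ} (hx : x ∈ CHM G J) :
    (nM G J : ℝ) ≤ ∑ v ∈ L, x v ∧ ∑ v ∈ L, x v ≤ (NM G J : ℝ) := by
  have hC : CHM G J ⊆
      {y : V → ℝ | (nM G J : ℝ) ≤ ∑ v ∈ L, y v ∧ ∑ v ∈ L, y v ≤ (NM G J : ℝ)} := by
    apply convexHull_min
    · rintro y ⟨S, hS, rfl⟩
      have hsum := sum_indVec (hS.1.1.trans hJL)
      constructor
      · rw [hsum]; exact_mod_cast nM_le_maxIndep_card G hS
      · rw [hsum]; exact_mod_cast maxIndep_card_le G hS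
    · intro y hy z hz a b ha hb hab
      have hsum : ∑ v ∈ L, (a • y + b • z) v = a * ∑ v ∈ L, y v + b * ∑ v ∈ L, z v := by
        simp [Finset.sum_add_distrib, Finset.mul_sum]
      rw [Set.mem_setOf_eq] at hy hz
      constructor <;> rw [hsum]
      · nlinarith [hy.1, hz.1]
      · nlinarith [hy.2, hz.2]
  exact hC hx

lemma marginal_sum {V : Type*} [Fintype V] [DecidableEq V] (π : Finset V → ℝ) (L : Finset V)
    (f : Finset V → ℝ) :
    ∑ J ∈ L.powerset, marginal π L J * f J = ∑ I : Finset V, π I * f (I ∩ L) := by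
  unfold marginal
  simp_rw [Finset.sum_mul, ite_mul, zero_mul]
  rw [Finset.sum_comm]
  refine Finset.sum_congr rfl fun I _ => ?_
  rw [Finset.sum_ite_eq L.powerset (I ∩ L) (fun J => π I * f J)]
  simp [Finset.inter_subset_right]

/-- **Theorem 3 (Lower bound on the fading local pooling factor).**
`σ*_L(π) ≥ (Σ_{J⊆L} π_L(J) n(M_J)) / (Σ_{J⊆L} π_L(J) N(M_J))`. -/
theorem flpf_lower_bound {V : Type*} [Fintype V] [DecidableEq V]
    (G : SimpleGraph V) (π : Finset V → ℝ) (hπ : IsFading π)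
    (L : Finset V) (hL : L.Nonempty)
    (hpos : 0 < ∑ J ∈ L.powerset, marginal π L J * (NM G J : ℝ)) :
    (∑ J ∈ L.powerset, marginal π L J * (nM G J : ℝ)) /
      (∑ J ∈ L.powerset, marginal π L J * (NM G J : ℝ)) ≤ sigmaL G π L := by
  classical
  unfold sigmaL
  -- a canonical element of Phi G π L
  have hchoice : ∀ J : Finset V, ∃ S, IsMaxIndepIn G (J ∩ L) S := fun J =>
    exists_maxIndep G (J ∩ L)
  set η0 : Finset V → V → ℝ := fun J => indVec (Classical.choose (hchoice J)) with hη0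
  have hη0mem : ∀ J, η0 J ∈ CHM G (J ∩ L) := fun J =>
    subset_convexHull ℝ _ ⟨Classical.choose (hchoice J), Classical.choose_spec (hchoice J), rfl⟩
  have hPhi : (∑ J : Finset V, π J • η0 J) ∈ Phi G π L := ⟨η0, hη0mem, rfl⟩
  refine le_csInf ⟨1, le_of_lt one_pos, _, hPhi, _, hPhi, fun v _ => by rw [one_mul]⟩ ?_
  rintro σ ⟨hσ0, φ1, ⟨η1, hη1, hφ1⟩, φ2, ⟨η2, hη2, hφ2⟩, hle⟩
  have hsum1' : ∀ (η : Finset V → V → ℝ),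
      ∑ v ∈ L, (∑ J : Finset V, π J • η J) v = ∑ J : Finset V, π J * ∑ v ∈ L, η J v := by
    intro η
    simp only [Finset.sum_apply, Pi.smul_apply, smul_eq_mul, Finset.mul_sum]
    rw [Finset.sum_comm]
  have hUB : ∑ v ∈ L, φ1 v ≤ ∑ J ∈ L.powerset, marginal π L J * (NM G J : ℝ) := by
    rw [hφ1, hsum1', marginal_sum]
    refine Finset.sum_le_sum fun J _ => ?_
    exact mul_le_mul_of_nonneg_left
      ((chm_bounds G Finset.inter_subset_right (hη1 J)).2) (hπ.1 J)
  have hLB : ∑ J ∈ L.powerset, marginal π L J * (nM G J : ℝ) ≤ ∑ v ∈ L, φ2 v := by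
    rw [hφ2, hsum1', marginal_sum]
    refine Finset.sum_le_sum fun J _ => ?_
    exact mul_le_mul_of_nonneg_left
      ((chm_bounds G Finset.inter_subset_right (hη2 J)).1) (hπ.1 J)
  have h2 : ∑ v ∈ L, φ2 v ≤ σ * ∑ v ∈ L, φ1 v := by
    rw [Finset.mul_sum]
    exact Finset.sum_le_sum hle
  rw [div_le_iff₀ hpos]
  calc ∑ J ∈ L.powerset, marginal π L J * (nM G J : ℝ)
      ≤ ∑ v ∈ L, φ2 v := hLB
    _ ≤ σ * ∑ v ∈ L, φ1 v := h2
    _ ≤ σ * ∑ J ∈ L.powerset, marginal π L J * (NM G J : ℝ) :=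
        mul_le_mul_of_nonneg_left hUB hσ0
end

section
/- Fix a network (K, G) with K nonempty and a fading structure π such that every link is ON with positive probability, i.e. for every l ∈ K, Σ_{J⊆K : l∈J} π(J) > 0. Then σ*_G(π) ≥ 1 / d_I(G). -/
open scoped BigOperators
open Filter MeasureTheory ProbabilityTheory

/-!
Pair the two sides of `σ φ₁ ≥ φ₂` with the linear functional `x ↦ ∑_{l ∈ L} x_l`. Every
independent set `T` of `J` is covered by the closed neighbourhoods of the links of a maximal
independent set `S` of `J`, and `T` meets each of them in at most `d_I(G)` links, so
`|T| ≤ d_I(G) |S|`. By linearity this gives `∑ φ₁ ≤ d_I(G) ∑ φ₂` on `Φ(L)`, while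
`∑ φ₂ ≥ P(l ∈ J) > 0` for any `l ∈ L`. Hence `∑ φ₂ ≤ σ ∑ φ₁ ≤ σ d_I(G) ∑ φ₂` forces
`σ d_I(G) ≥ 1`.
-/

open Finset

section InterferenceDegree

variable {V : Type*} [Fintype V] (G : SimpleGraph V)

lemma card_le_dIG (l : V) (S : Finset V) (hS : ∀ u ∈ S, ∀ v ∈ S, ¬ G.Adj u v)
    (hSl : ∀ v ∈ S, v = l ∨ G.Adj l v) : S.card ≤ dIG G := by
  have hbdd : BddAbove (card '' {S : Finset V | (∀ u ∈ S, ∀ v ∈ S, ¬ G.Adj u v) ∧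
      ∀ v ∈ S, v = l ∨ G.Adj l v}) :=
    ⟨Fintype.card V, by rintro _ ⟨S, _, rfl⟩; exact card_le_univ S⟩
  calc S.card ≤ dI G l := le_csSup hbdd ⟨S, ⟨hS, hSl⟩, rfl⟩
    _ ≤ dIG G := le_csSup (Set.finite_range (dI G)).bddAbove ⟨l, rfl⟩

lemma dIG_pos (l : V) : 0 < dIG G :=
  card_le_dIG G l {l} (by simp) (by simp)

end InterferenceDegree

section IndependentSets

variable {V : Type*} {G : SimpleGraph V} {A S T : Finset V}

lemma isIndepIn_singleton {a : V} (ha : a ∈ A) : IsIndepIn G A {a} :=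
  ⟨singleton_subset_iff.mpr ha, by simp⟩

lemma IsIndepIn.insert [DecidableEq V] (hS : IsIndepIn G A S) {t : V} (ht : t ∈ A)
    (hnadj : ∀ s ∈ S, ¬ G.Adj s t) : IsIndepIn G A (insert t S) := by
  refine ⟨insert_subset ht hS.1, ?_⟩
  simp only [mem_insert, forall_eq_or_imp, G.irrefl, not_false_eq_true, true_and]
  exact ⟨fun v hv h => hnadj v hv h.symm, fun u hu => ⟨hnadj u hu, hS.2 u hu⟩⟩

lemma IsMaxIndepIn.exists_eq_or_adj (hS : IsMaxIndepIn G A S) {t : V} (ht : t ∈ A) :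
    ∃ s ∈ S, t = s ∨ G.Adj s t := by
  classical
  by_contra! h
  have hins := hS.2 _ (hS.1.insert ht fun s hs => (h s hs).2) (subset_insert t S)
  obtain ⟨htS, -⟩ := h t (hins ▸ mem_insert_self t S)
  exact htS rfl

lemma IsMaxIndepIn.nonempty (hS : IsMaxIndepIn G A S) (hA : A.Nonempty) : S.Nonempty := by
  obtain ⟨a, ha⟩ := hA
  obtain ⟨s, hs, -⟩ := hS.exists_eq_or_adj ha
  exact ⟨s, hs⟩

lemma exists_isMaxIndepIn (G : SimpleGraph V) (A : Finset V) : ∃ S, IsMaxIndepIn G A S := by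
  classical
  obtain ⟨S, hS, hmax⟩ := exists_max_image ({S ∈ A.powerset | IsIndepIn G A S})
    card ⟨∅, mem_filter.mpr ⟨empty_mem_powerset A, empty_subset A, by simp⟩⟩
  refine ⟨S, (mem_filter.mp hS).2, fun T hT hST => ?_⟩
  exact eq_of_subset_of_card_le hST (hmax T (mem_filter.mpr ⟨mem_powerset.mpr hT.1, hT⟩))

variable [Fintype V]

lemma IsIndepIn.card_le_dIG_mul (hT : IsIndepIn G A T) (hS : IsMaxIndepIn G A S) :
    T.card ≤ dIG G * S.card := by
  classical
  have hcover : ∀ t, ∃ s, t ∈ T → s ∈ S ∧ (t = s ∨ G.Adj s t) := fun t => by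
    by_cases ht : t ∈ T
    · obtain ⟨s, hs, h⟩ := hS.exists_eq_or_adj (hT.1 ht)
      exact ⟨s, fun _ => ⟨hs, h⟩⟩
    · exact ⟨t, fun h => absurd h ht⟩
  choose f hf using hcover
  refine card_le_mul_card_image_of_maps_to (fun t ht => (hf t ht).1) _ fun s _ => ?_
  refine card_le_dIG G s _ (fun u hu v hv => hT.2 u (mem_filter.mp hu).1 v (mem_filter.mp hv).1)
    fun t ht => ?_
  obtain ⟨htT, rfl⟩ := mem_filter.mp ht
  exact (hf t htT).2

end IndependentSets

section LinkSum

variable {V : Type*}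

def linkSum (L : Finset V) : (V → ℝ) →ₗ[ℝ] ℝ := ∑ v ∈ L, LinearMap.proj v

lemma linkSum_apply (L : Finset V) (x : V → ℝ) : linkSum L x = ∑ v ∈ L, x v := by
  simp [linkSum]

variable [DecidableEq V] {G : SimpleGraph V}

lemma linkSum_indVec {L S : Finset V} (h : S ⊆ L) : linkSum L (indVec S) = S.card := by
  simp only [linkSum_apply, indVec]
  rw [sum_boole, filter_mem_eq_inter, inter_eq_right.mpr h]

variable {A L : Finset V} {x : V → ℝ}

lemma exists_isMaxIndepIn_linkSum_le (hAL : A ⊆ L) (hx : x ∈ CHM G A) :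
    ∃ S, IsMaxIndepIn G A S ∧ linkSum L x ≤ S.card := by
  obtain ⟨_, ⟨S, hS, rfl⟩, h⟩ :=
    ((linkSum L).convexOn convex_univ).exists_ge_of_mem_convexHull (Set.subset_univ _) hx
  exact ⟨S, hS, linkSum_indVec (hS.1.1.trans hAL) ▸ h⟩

lemma exists_isMaxIndepIn_card_le_linkSum (hAL : A ⊆ L) (hx : x ∈ CHM G A) :
    ∃ S, IsMaxIndepIn G A S ∧ (S.card : ℝ) ≤ linkSum L x := by
  obtain ⟨_, ⟨S, hS, rfl⟩, h⟩ :=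
    ((linkSum L).concaveOn convex_univ).exists_le_of_mem_convexHull (Set.subset_univ _) hx
  exact ⟨S, hS, linkSum_indVec (hS.1.1.trans hAL) ▸ h⟩

lemma one_le_linkSum (hA : A.Nonempty) (hAL : A ⊆ L) (hx : x ∈ CHM G A) :
    1 ≤ linkSum L x := by
  obtain ⟨S, hS, h⟩ := exists_isMaxIndepIn_card_le_linkSum hAL hx
  exact le_trans (by exact_mod_cast (hS.nonempty hA).card_pos) h

lemma linkSum_nonneg (hAL : A ⊆ L) (hx : x ∈ CHM G A) : 0 ≤ linkSum L x := by
  obtain ⟨S, -, h⟩ := exists_isMaxIndepIn_card_le_linkSum hAL hx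
  exact le_trans (Nat.cast_nonneg _) h

variable [Fintype V]

lemma linkSum_le_dIG_mul (hAL : A ⊆ L) {y : V → ℝ} (hx : x ∈ CHM G A) (hy : y ∈ CHM G A) :
    linkSum L x ≤ dIG G * linkSum L y := by
  obtain ⟨S, hS, hxS⟩ := exists_isMaxIndepIn_linkSum_le hAL hx
  obtain ⟨T, hT, hTy⟩ := exists_isMaxIndepIn_card_le_linkSum hAL hy
  calc linkSum L x ≤ S.card := hxS
    _ ≤ (dIG G * T.card : ℕ) := by exact_mod_cast hS.1.card_le_dIG_mul hT
    _ ≤ dIG G * linkSum L y := by push_cast; gcongr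

end LinkSum

section Phi

variable {V : Type*} [Fintype V] [DecidableEq V]

lemma Phi_nonempty (G : SimpleGraph V) (π : Finset V → ℝ) (L : Finset V) :
    (Phi G π L).Nonempty := by
  choose S hS using fun J : Finset V => exists_isMaxIndepIn G (J ∩ L)
  exact ⟨_, fun J => indVec (S J), fun J => subset_convexHull ℝ _ ⟨S J, hS J, rfl⟩, rfl⟩

variable {G : SimpleGraph V} {π : Finset V → ℝ} {L : Finset V}

lemma exists_linkSum_eq_of_mem_Phi {φ : V → ℝ} (hφ : φ ∈ Phi G π L) :
    ∃ η : Finset V → V → ℝ, (∀ J, η J ∈ CHM G (J ∩ L)) ∧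
      linkSum L φ = ∑ J, π J * linkSum L (η J) := by
  obtain ⟨η, hη, rfl⟩ := hφ
  exact ⟨η, hη, by simp only [map_sum, map_smul, smul_eq_mul]⟩

lemma linkSum_le_dIG_mul_of_mem_Phi (hπ : ∀ J, 0 ≤ π J) {φ₁ φ₂ : V → ℝ}
    (h₁ : φ₁ ∈ Phi G π L) (h₂ : φ₂ ∈ Phi G π L) :
    linkSum L φ₁ ≤ dIG G * linkSum L φ₂ := by
  obtain ⟨η₁, hη₁, hφ₁⟩ := exists_linkSum_eq_of_mem_Phi h₁
  obtain ⟨η₂, hη₂, hφ₂⟩ := exists_linkSum_eq_of_mem_Phi h₂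
  rw [hφ₁, hφ₂, mul_sum]
  refine sum_le_sum fun J _ => ?_
  rw [mul_left_comm]
  exact mul_le_mul_of_nonneg_left
    (linkSum_le_dIG_mul inter_subset_right (hη₁ J) (hη₂ J)) (hπ J)

lemma sum_filter_mem_le_linkSum_of_mem_Phi (hπ : ∀ J, 0 ≤ π J) {l : V} (hl : l ∈ L)
    {φ : V → ℝ} (hφ : φ ∈ Phi G π L) :
    ∑ J ∈ univ.filter (fun J : Finset V => l ∈ J), π J ≤ linkSum L φ := by
  obtain ⟨η, hη, hφη⟩ := exists_linkSum_eq_of_mem_Phi hφ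
  rw [hφη, sum_filter]
  refine sum_le_sum fun J _ => ?_
  split_ifs with hJ
  · exact le_mul_of_one_le_right (hπ J)
      (one_le_linkSum ⟨l, mem_inter.mpr ⟨hJ, hl⟩⟩ inter_subset_right (hη J))
  · exact mul_nonneg (hπ J) (linkSum_nonneg inter_subset_right (hη J))

end Phi

variable {V : Type*} [Fintype V] [DecidableEq V] in
lemma inv_dIG_le_sigmaL (G : SimpleGraph V) {π : Finset V → ℝ} (hπ : ∀ J, 0 ≤ π J)
    {L : Finset V} {l : V} (hl : l ∈ L)
    (hON : 0 < ∑ J ∈ univ.filter (fun J : Finset V => l ∈ J), π J) :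
    1 / (dIG G : ℝ) ≤ sigmaL G π L := by
  obtain ⟨φ, hφ⟩ := Phi_nonempty G π L
  refine le_csInf ⟨1, zero_le_one, φ, hφ, φ, hφ, fun v _ => (one_mul _).ge⟩ ?_
  rintro σ ⟨hσ, φ₁, h₁, φ₂, h₂, hle⟩
  have hpos : 0 < linkSum L φ₂ :=
    hON.trans_le (sum_filter_mem_le_linkSum_of_mem_Phi hπ hl h₂)
  have hchain : linkSum L φ₂ ≤ σ * dIG G * linkSum L φ₂ :=
    calc linkSum L φ₂ ≤ σ * linkSum L φ₁ := by
          simpa only [linkSum_apply, mul_sum] using sum_le_sum hle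
      _ ≤ σ * (dIG G * linkSum L φ₂) :=
          mul_le_mul_of_nonneg_left (linkSum_le_dIG_mul_of_mem_Phi hπ h₁ h₂) hσ
      _ = σ * dIG G * linkSum L φ₂ := by ring
  rw [div_le_iff₀ (by exact_mod_cast dIG_pos G l)]
  nlinarith

/-- **Corollary 1.** If every link is 'ON' with positive probability, then
`σ*_G(π) ≥ 1 / d_I(G)`. -/
theorem flpf_ge_inv_interference_degree {V : Type*} [Fintype V] [DecidableEq V] [Nonempty V]
    (G : SimpleGraph V) (π : Finset V → ℝ) (hπ : IsFading π)
    (hON : ∀ l : V, 0 < ∑ J ∈ Finset.univ.filter (fun J : Finset V => l ∈ J), π J) :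
    1 / (dIG G : ℝ) ≤ sigmaG G π := by
  refine le_csInf ⟨_, univ, univ_nonempty, rfl⟩ ?_
  rintro _ ⟨L, ⟨l, hl⟩, rfl⟩
  exact inv_dIG_le_sigmaL G hπ.1 hl (hON l)
end

section
/- Consider the network with links K = {a, b, c} whose interference graph G has exactly the edges {a,b} and {b,c}, and the fading structure π with π({a,b}) = π({b,c}) = π({a,b,c}) = 1/3 and π(J) = 0 for all other J ⊆ K. Then the vectors φ1 = (1/3, 1/3, 1/3) and φ2 = (5/12, 5/12, 5/12) both belong to Φ(K), φ1 = (4/5)·φ2, and consequently σ*_G(π) ≤ 4/5. -/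
open scoped BigOperators
open Filter MeasureTheory ProbabilityTheory

/-- The 3-link path network `a - b - c` (links `0,1,2`, edges `{0,1}` and `{1,2}`). -/
def Gpath : SimpleGraph (Fin 3) :=
  SimpleGraph.fromRel (fun u v => (u = 0 ∧ v = 1) ∨ (u = 1 ∧ v = 2))

/-- The fading structure of Example B: `π({a,b}) = π({b,c}) = π({a,b,c}) = 1/3`. -/
noncomputable def piPath : Finset (Fin 3) → ℝ := fun J =>
  if J = {0, 1} ∨ J = {1, 2} ∨ J = {0, 1, 2} then 1 / 3 else 0

instance : DecidableRel Gpath.Adj := fun u v =>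
  decidable_of_iff (u ≠ v ∧ ((u = 0 ∧ v = 1) ∨ (u = 1 ∧ v = 2) ∨ (v = 0 ∧ u = 1) ∨ (v = 1 ∧ u = 2)))
    (by rw [Gpath, SimpleGraph.fromRel_adj]; tauto)

instance (J S : Finset (Fin 3)) : Decidable (IsIndepIn Gpath J S) := by
  unfold IsIndepIn; infer_instance

instance (J S : Finset (Fin 3)) : Decidable (IsMaxIndepIn Gpath J S) := by
  unfold IsMaxIndepIn; infer_instance

/-- a canonical maximal independent set of each `J`. -/
def mPath (J : Finset (Fin 3)) : Finset (Fin 3) :=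
  if J = {0, 1} then {0} else if J = {1, 2} then {2} else if J = {0, 1, 2} then {1} else J

lemma mPath_max : ∀ J : Finset (Fin 3), IsMaxIndepIn Gpath J (mPath J) := by decide

lemma indVec_mem_CHM {J S : Finset (Fin 3)} (h : IsMaxIndepIn Gpath J S) :
    indVec S ∈ CHM Gpath J :=
  subset_convexHull ℝ _ ⟨S, h, rfl⟩

noncomputable def eta1 : Finset (Fin 3) → Fin 3 → ℝ := fun J => indVec (mPath J)

noncomputable def eta2 : Finset (Fin 3) → Fin 3 → ℝ := fun J =>
  if J = {0, 1} then (1/2 : ℝ) • indVec ({0} : Finset (Fin 3)) + (1/2 : ℝ) • indVec ({1} : Finset (Fin 3))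
  else if J = {1, 2} then (1/2 : ℝ) • indVec ({1} : Finset (Fin 3)) + (1/2 : ℝ) • indVec ({2} : Finset (Fin 3))
  else if J = {0, 1, 2} then (3/4 : ℝ) • indVec ({0, 2} : Finset (Fin 3)) + (1/4 : ℝ) • indVec ({1} : Finset (Fin 3))
  else indVec (mPath J)

lemma sum_piPath_smul (η : Finset (Fin 3) → Fin 3 → ℝ) :
    ∑ J : Finset (Fin 3), piPath J • η J =
      (1/3 : ℝ) • η {0, 1} + ((1/3 : ℝ) • η {1, 2} + (1/3 : ℝ) • η {0, 1, 2}) := by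
  rw [← Finset.sum_subset
    (Finset.subset_univ ({{0, 1}, {1, 2}, {0, 1, 2}} : Finset (Finset (Fin 3))))]
  · rw [Finset.sum_insert (by decide), Finset.sum_insert (by decide), Finset.sum_singleton]
    have h1 : piPath {0, 1} = 1/3 := by rw [piPath]; simp
    have h2 : piPath {1, 2} = 1/3 := by rw [piPath]; simp
    have h3 : piPath {0, 1, 2} = 1/3 := by rw [piPath]; simp
    rw [h1, h2, h3]
  · intro x _ hx
    have hx' : ¬(x = {0, 1} ∨ x = {1, 2} ∨ x = {0, 1, 2}) := by
      simp only [Finset.mem_insert, Finset.mem_singleton] at hx; tauto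
    have : piPath x = 0 := by rw [piPath, if_neg hx']
    rw [this, zero_smul]

/-- **Example B.** For the 3-link path with fading structure `piPath`, the vectors
`φ1 = (1/3,1/3,1/3)` and `φ2 = (5/12,5/12,5/12)` both belong to `Φ(K)`,
`φ1 = (4/5)·φ2`, and hence `σ*_G(π) ≤ 4/5`. -/
theorem example_B_flpf_le :
    IsFading piPath ∧
    (fun _ : Fin 3 => (1 / 3 : ℝ)) ∈ Phi Gpath piPath Finset.univ ∧
    (fun _ : Fin 3 => (5 / 12 : ℝ)) ∈ Phi Gpath piPath Finset.univ ∧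
    (fun _ : Fin 3 => (1 / 3 : ℝ)) = (4 / 5 : ℝ) • (fun _ : Fin 3 => (5 / 12 : ℝ)) ∧
    sigmaG Gpath piPath ≤ 4 / 5 := by
  have hm01 : mPath {0, 1} = {0} := by decide
  have hm12 : mPath {1, 2} = {2} := by decide
  have hm012 : mPath {0, 1, 2} = {1} := by decide
  -- membership of φ1
  have hφ1 : (fun _ : Fin 3 => (1 / 3 : ℝ)) ∈ Phi Gpath piPath Finset.univ := by
    refine ⟨eta1, fun J => ?_, ?_⟩
    · rw [Finset.inter_univ]
      exact indVec_mem_CHM (mPath_max J)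
    · rw [sum_piPath_smul eta1]
      funext v
      simp only [eta1, hm01, hm12, hm012, Pi.add_apply, Pi.smul_apply, smul_eq_mul]
      fin_cases v <;> norm_num [indVec, Fin.ext_iff]
  -- membership of φ2
  have hφ2 : (fun _ : Fin 3 => (5 / 12 : ℝ)) ∈ Phi Gpath piPath Finset.univ := by
    refine ⟨eta2, fun J => ?_, ?_⟩
    · rw [Finset.inter_univ]
      by_cases h1 : J = {0, 1}
      · subst h1
        rw [eta2, if_pos rfl]
        exact (convex_convexHull ℝ _) (indVec_mem_CHM (by decide))
          (indVec_mem_CHM (by decide)) (by norm_num) (by norm_num) (by norm_num)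
      by_cases h2 : J = {1, 2}
      · subst h2
        rw [eta2, if_neg h1, if_pos rfl]
        exact (convex_convexHull ℝ _) (indVec_mem_CHM (by decide))
          (indVec_mem_CHM (by decide)) (by norm_num) (by norm_num) (by norm_num)
      by_cases h3 : J = {0, 1, 2}
      · subst h3
        rw [eta2, if_neg h1, if_neg h2, if_pos rfl]
        exact (convex_convexHull ℝ _) (indVec_mem_CHM (by decide))
          (indVec_mem_CHM (by decide)) (by norm_num) (by norm_num) (by norm_num)
      · rw [eta2, if_neg h1, if_neg h2, if_neg h3]
        exact indVec_mem_CHM (mPath_max J)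
    · rw [sum_piPath_smul eta2]
      funext v
      rw [eta2, if_pos rfl, eta2, if_neg (by decide), if_pos rfl,
        eta2, if_neg (by decide), if_neg (by decide), if_pos rfl]
      simp only [Pi.add_apply, Pi.smul_apply, smul_eq_mul]
      fin_cases v <;> norm_num [indVec, Fin.ext_iff]
  -- fading structure
  have hfad : IsFading piPath := by
    constructor
    · intro J
      rw [piPath]
      split <;> norm_num
    · have h := congrFun (sum_piPath_smul (fun _ _ => (1 : ℝ))) 0
      simp only [Finset.sum_apply, Pi.smul_apply, Pi.add_apply, smul_eq_mul, mul_one] at h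
      rw [h]; norm_num
  refine ⟨hfad, hφ1, hφ2, ?_, ?_⟩
  · funext v; simp; norm_num
  · -- sigmaG ≤ sigmaL univ ≤ 4/5
    have hL : sigmaL Gpath piPath Finset.univ ≤ 4 / 5 := by
      apply csInf_le ⟨0, fun σ hσ => hσ.1⟩
      refine ⟨by norm_num, _, hφ2, _, hφ1, fun v _ => by norm_num⟩
    have hnonneg : ∀ L : Finset (Fin 3), 0 ≤ sigmaL Gpath piPath L := by
      intro L
      exact Real.sInf_nonneg (fun σ hσ => hσ.1)
    calc sigmaG Gpath piPath ≤ sigmaL Gpath piPath Finset.univ := by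
          apply csInf_le
          · refine ⟨0, ?_⟩
            rintro x ⟨L, _, rfl⟩
            exact hnonneg L
          · exact ⟨Finset.univ, Finset.univ_nonempty, rfl⟩
      _ ≤ 4 / 5 := hL
end
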